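/- Let α be a nonnegative integer and β > −1 a real number. Then b_{2α+4}(α,β,x) = −(x²−1)^{α+2} / ((β+1)_{α+1} (α+2)!) for all real x. -/

import Mathlib

/-- The Pochhammer symbol (rising factorial) `(a)_k = a (a+1) ⋯ (a+k-1)`. -/
noncomputable def poch (a : ℝ) (k : ℕ) : ℝ := (ascPochhammer ℝ k).eval a

open Finset

lemma poch_zero (a : ℝ) : poch a 0 = 1 := by simp [poch]
lemma poch_succ (a : ℝ) (n : ℕ) : poch a (n + 1) = poch a n * (a + n) :=
  ascPochhammer_succ_eval n a
lemma poch_succ_left (a : ℝ) (n : ℕ) : poch a (n + 1) = a * poch (a + 1) n := by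
  unfold poch
  rw [ascPochhammer_succ_left, Polynomial.eval_mul, Polynomial.eval_X, Polynomial.eval_comp]
  simp

/-- Vandermonde identity for rising factorials. -/
lemma poch_vandermonde (n : ℕ) (x y : ℝ) :
    poch (x + y) n =
      ∑ s ∈ range (n + 1), (n.choose s : ℝ) * poch x s * poch y (n - s) := by
  induction n with
  | zero => simp [poch_zero]
  | succ n ih =>
    rw [Finset.sum_range_succ'
      (fun s => ((n+1).choose s : ℝ) * poch x s * poch y (n + 1 - s)) (n+1)]
    have step1 : ∀ s ∈ range (n+1),
        (((n+1).choose (s+1) : ℝ)) * poch x (s+1) * poch y (n + 1 - (s+1))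
        = ((n.choose s : ℝ)) * poch x (s+1) * poch y (n - s)
          + ((n.choose (s+1) : ℝ)) * poch x (s+1) * poch y (n - s) := by
      intro s _
      rw [Nat.succ_sub_succ, Nat.choose_succ_succ]
      push_cast; ring
    rw [Finset.sum_congr rfl step1, Finset.sum_add_distrib]
    have step2 : (∑ s ∈ range (n+1), ((n.choose (s+1) : ℝ)) * poch x (s+1) * poch y (n - s))
        + (((n+1).choose 0 : ℝ)) * poch x 0 * poch y (n + 1 - 0)
        = ∑ s ∈ range (n + 1), ((n.choose s : ℝ)) * poch x s * poch y (n + 1 - s) := by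
      rw [Finset.sum_range_succ'
        (fun s => ((n.choose s : ℝ)) * poch x s * poch y (n + 1 - s)) n,
        Finset.sum_range_succ
        (fun s => ((n.choose (s+1) : ℝ)) * poch x (s+1) * poch y (n - s)) n]
      simp only [Nat.succ_sub_succ, Nat.choose_succ_self, Nat.cast_zero, zero_mul,
        add_zero, Nat.choose_zero_right, Nat.cast_one, one_mul, poch_zero, Nat.sub_zero]
    rw [add_assoc, step2]
    have hper : ∀ s ∈ range (n+1),
        ((n.choose s : ℝ)) * poch x (s+1) * poch y (n - s)
          + ((n.choose s : ℝ)) * poch x s * poch y (n + 1 - s)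
        = ((n.choose s : ℝ) * poch x s * poch y (n - s)) * (x + y + n) := by
      intro s hs
      have hs' : s ≤ n := Nat.lt_succ_iff.mp (mem_range.mp hs)
      rw [show n + 1 - s = (n - s) + 1 from by omega, poch_succ, poch_succ]
      rw [show ((n - s : ℕ) : ℝ) = (n : ℝ) - s from by
        rw [Nat.cast_sub hs']]
      ring
    rw [← Finset.sum_add_distrib, Finset.sum_congr rfl hper, ← Finset.sum_mul, ← ih,
      poch_succ]

/-- Chu–Vandermonde, finite polynomial form. -/
lemma chu (l : ℕ) : ∀ v w : ℝ,
    ∑ m ∈ range (l + 1), (-1 : ℝ) ^ m * (l.choose m : ℝ) * poch w m * poch (v + m) (l - m)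
      = poch (v - w) l := by
  induction l with
  | zero => intro v w; simp [poch_zero]
  | succ l ih =>
    intro v w
    rw [Finset.sum_range_succ'
      (fun m => (-1 : ℝ) ^ m * ((l+1).choose m : ℝ) * poch w m * poch (v + (m : ℝ)) (l + 1 - m)) (l+1)]
    have step1 : ∀ m ∈ range (l+1),
        (-1 : ℝ) ^ (m+1) * (((l+1).choose (m+1) : ℝ)) * poch w (m+1) * poch (v + ((m+1 : ℕ) : ℝ)) (l + 1 - (m+1))
        = (-1 : ℝ) ^ (m+1) * ((l.choose m : ℝ)) * poch w (m+1) * poch (v + ((m+1 : ℕ) : ℝ)) (l - m)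
          + (-1 : ℝ) ^ (m+1) * ((l.choose (m+1) : ℝ)) * poch w (m+1) * poch (v + ((m+1 : ℕ) : ℝ)) (l - m) := by
      intro m _
      rw [Nat.succ_sub_succ, Nat.choose_succ_succ]
      push_cast; ring
    rw [Finset.sum_congr rfl step1, Finset.sum_add_distrib, add_assoc]
    have step2 : (∑ m ∈ range (l+1),
          (-1 : ℝ) ^ (m+1) * ((l.choose (m+1) : ℝ)) * poch w (m+1) * poch (v + ((m+1 : ℕ) : ℝ)) (l - m))
        + (-1 : ℝ) ^ 0 * (((l+1).choose 0 : ℝ)) * poch w 0 * poch (v + ((0 : ℕ) : ℝ)) (l + 1 - 0)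
        = ∑ m ∈ range (l+1),
          (-1 : ℝ) ^ m * ((l.choose m : ℝ)) * poch w m * poch (v + (m : ℝ)) (l + 1 - m) := by
      rw [Finset.sum_range_succ'
        (fun m => (-1 : ℝ) ^ m * ((l.choose m : ℝ)) * poch w m * poch (v + (m : ℝ)) (l + 1 - m)) l,
        Finset.sum_range_succ
        (fun m => (-1 : ℝ) ^ (m+1) * ((l.choose (m+1) : ℝ)) * poch w (m+1) * poch (v + ((m+1 : ℕ) : ℝ)) (l - m)) l]
      simp only [Nat.succ_sub_succ, Nat.choose_succ_self, Nat.cast_zero, mul_zero, zero_mul,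
        add_zero, Nat.choose_zero_right, Nat.cast_one, mul_one, one_mul, poch_zero,
        Nat.sub_zero, pow_zero]
    rw [step2]
    have hper : ∀ m ∈ range (l+1),
        (-1 : ℝ) ^ (m+1) * ((l.choose m : ℝ)) * poch w (m+1) * poch (v + ((m+1 : ℕ) : ℝ)) (l - m)
          + (-1 : ℝ) ^ m * ((l.choose m : ℝ)) * poch w m * poch (v + (m : ℝ)) (l + 1 - m)
        = (v - w) * ((-1 : ℝ) ^ m * (l.choose m : ℝ) * poch w m * poch ((v + 1) + (m : ℝ)) (l - m)) := by
      intro m hm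
      have hm' : m ≤ l := Nat.lt_succ_iff.mp (mem_range.mp hm)
      rw [show l + 1 - m = (l - m) + 1 from by omega, poch_succ_left (v + (m : ℝ)) (l - m),
        poch_succ w m, show (v + ((m+1 : ℕ) : ℝ)) = (v + (m : ℝ)) + 1 from by push_cast; ring,
        show (v + (m : ℝ)) + 1 = (v + 1) + (m : ℝ) from by ring]
      ring
    rw [← Finset.sum_add_distrib, Finset.sum_congr rfl hper, ← Finset.mul_sum, ih (v+1) w,
      show v + 1 - w = (v - w) + 1 from by ring, ← poch_succ_left]

lemma poch_pos {a : ℝ} (h : 0 < a) (n : ℕ) : 0 < poch a n := ascPochhammer_pos n a h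
lemma poch_neg_nat (l m : ℕ) : poch (-(l : ℝ)) m = (-1) ^ m * (l.descFactorial m : ℝ) := by
  unfold poch
  rw [ascPochhammer_eval_neg_eq_descPochhammer, descPochhammer_eval_eq_descFactorial]
lemma poch_neg_self (l : ℕ) : poch (-(l : ℝ)) l = (-1) ^ l * (l.factorial : ℝ) := by
  rw [poch_neg_nat, Nat.descFactorial_self]
lemma poch_neg_zero_of_lt {k n : ℕ} (h : k < n) : poch (-(k : ℝ)) n = 0 :=
  ascPochhammer_eval_neg_coe_nat_of_lt h
lemma poch_add (a : ℝ) (m n : ℕ) : poch a (m + n) = poch a m * poch (a + m) n := by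
  unfold poch
  rw [← ascPochhammer_mul, Polynomial.eval_mul, Polynomial.eval_comp]
  simp
lemma poch_fac (r n : ℕ) : (r.factorial : ℝ) * poch ((r : ℝ) + 1) n = ((r + n).factorial : ℝ) :=
  factorial_mul_ascPochhammer ℝ r n

/-- Chu–Vandermonde in hypergeometric (divided) form. -/
lemma chu_div (l : ℕ) (v w : ℝ) (hv : 0 < v) :
    ∑ m ∈ range (l + 1), poch (-(l : ℝ)) m * poch w m / (poch v m * (m.factorial : ℝ))
      = poch (v - w) l / poch v l := by
  rw [← chu l v w, Finset.sum_div]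
  apply Finset.sum_congr rfl
  intro m hm
  have hm' : m ≤ l := Nat.lt_succ_iff.mp (mem_range.mp hm)
  rw [poch_neg_nat, Nat.descFactorial_eq_factorial_mul_choose,
    show poch v l = poch v m * poch (v + (m : ℝ)) (l - m) from by
      rw [← poch_add, Nat.add_sub_cancel' hm']]
  have h1 : poch v m ≠ 0 := ne_of_gt (poch_pos hv m)
  have h2 : poch (v + (m : ℝ)) (l - m) ≠ 0 :=
    ne_of_gt (poch_pos (by positivity) _)
  have h3 : (m.factorial : ℝ) ≠ 0 := by positivity
  field_simp
  push_cast; ring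

lemma inner_eval (α j : ℕ) (hj : j ≤ α + 2) (β : ℝ) (hβ : -1 < β)
    (L U V W : ℝ) (hL : L = (α : ℝ) + 1 + j) (hU : U = 2*(α : ℝ) + 5 - j)
    (hV : V = (α : ℝ) + 4 - j) (hW : W = β + (α : ℝ) + 3 - j) :
    ∑ m ∈ Finset.range (α + 1 + j + 1),
      poch (-L) m * poch ((α : ℝ) + β + 3) m * poch U m /
        (poch W m * poch V m * (Nat.factorial m : ℝ))
      = (-1 : ℝ) ^ (α + 1 + j) * ((α + 1 + j).factorial : ℝ) * ((α + 3 - j).factorial : ℝ) /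
          (((2*α + 4 - j).factorial : ℝ) * poch W j) := by
  subst hL hU hV hW
  have hjr : (j : ℝ) ≤ (α : ℝ) + 2 := by exact_mod_cast hj
  have hWpos : (0 : ℝ) < β + (α : ℝ) + 3 - j := by linarith
  have hVpos : (0 : ℝ) < (α : ℝ) + 4 - j := by linarith
  have hUpos : (0 : ℝ) < 2*(α : ℝ) + 5 - j := by linarith
  set W : ℝ := β + (α : ℝ) + 3 - j with hW
  set U : ℝ := 2*(α : ℝ) + 5 - j with hU
  set V : ℝ := (α : ℝ) + 4 - j with hV
  have hWj : poch W j ≠ 0 := ne_of_gt (poch_pos hWpos j)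
  rw [show -((α : ℝ) + 1 + j) = -(((α+1+j : ℕ) : ℝ)) from by push_cast; ring]
  -- step 1 : pull the β-dependence out as `poch (W+m) j`
  have step1 : ∀ m ∈ range (α+1+j+1),
      poch (-((α+1+j : ℕ) : ℝ)) m * poch ((α : ℝ) + β + 3) m * poch U m /
        (poch W m * poch V m * (Nat.factorial m : ℝ))
      = (poch (-((α+1+j : ℕ) : ℝ)) m * poch U m / (poch V m * (Nat.factorial m : ℝ)))
          * (poch (W + (m : ℝ)) j / poch W j) := by
    intro m _
    have key : poch W m * poch (W + (m : ℝ)) j = poch W j * poch ((α : ℝ) + β + 3) m := by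
      rw [show (α : ℝ) + β + 3 = W + (j : ℝ) from by rw [hW]; ring, ← poch_add, ← poch_add,
        add_comm]
    have h1 : poch W m ≠ 0 := ne_of_gt (poch_pos hWpos m)
    have h3 : poch V m ≠ 0 := ne_of_gt (poch_pos hVpos m)
    have h4 : (Nat.factorial m : ℝ) ≠ 0 := by positivity
    rw [div_mul_div_comm, div_eq_div_iff (by exact mul_ne_zero (mul_ne_zero h1 h3) h4)
      (by exact mul_ne_zero (mul_ne_zero h3 h4) hWj)]
    linear_combination (-(poch (-((α+1+j : ℕ) : ℝ)) m * poch U m * poch V m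
      * (Nat.factorial m : ℝ))) * key
  rw [Finset.sum_congr rfl step1]
  -- step 2 : Vandermonde expansion of `poch (W+m) j`
  have step2 : ∀ m ∈ range (α+1+j+1),
      (poch (-((α+1+j : ℕ) : ℝ)) m * poch U m / (poch V m * (Nat.factorial m : ℝ)))
          * (poch (W + (m : ℝ)) j / poch W j)
      = ∑ s ∈ range (j+1),
          (poch (-((α+1+j : ℕ) : ℝ)) m * poch U m / (poch V m * (Nat.factorial m : ℝ)))
            * ((j.choose s : ℝ) * poch (U + (m : ℝ)) s * poch (W - U) (j - s) / poch W j) := by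
    intro m _
    rw [show W + (m : ℝ) = (U + (m : ℝ)) + (W - U) from by ring, poch_vandermonde j,
      Finset.sum_div, Finset.mul_sum]
  rw [Finset.sum_congr rfl step2, Finset.sum_comm]
  -- step 3 : inner sums over m are Chu–Vandermonde
  have step3 : ∀ s ∈ range (j+1),
      (∑ m ∈ range (α+1+j+1),
        (poch (-((α+1+j : ℕ) : ℝ)) m * poch U m / (poch V m * (Nat.factorial m : ℝ)))
          * ((j.choose s : ℝ) * poch (U + (m : ℝ)) s * poch (W - U) (j - s) / poch W j))
      = ((j.choose s : ℝ) * poch (W - U) (j - s) * poch U s / poch W j)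
          * (poch (-((α+1+s : ℕ) : ℝ)) (α+1+j) / poch V (α+1+j)) := by
    intro s _
    have huu : ∀ m : ℕ, poch U m * poch (U + (m : ℝ)) s = poch U s * poch (U + (s : ℝ)) m := by
      intro m
      rw [← poch_add, ← poch_add, add_comm]
    have hmain : (∑ m ∈ range (α+1+j+1),
        poch (-((α+1+j : ℕ) : ℝ)) m * poch (U + (s : ℝ)) m / (poch V m * (Nat.factorial m : ℝ)))
        = poch (V - (U + (s : ℝ))) (α+1+j) / poch V (α+1+j) := chu_div (α+1+j) V _ hVpos
    rw [show V - (U + (s : ℝ)) = -(((α+1+s : ℕ) : ℝ)) from by push_cast; ring] at hmain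
    rw [← hmain, Finset.mul_sum]
    apply Finset.sum_congr rfl
    intro m _
    have h3 : poch V m ≠ 0 := ne_of_gt (poch_pos hVpos m)
    have h4 : (Nat.factorial m : ℝ) ≠ 0 := by positivity
    rw [div_mul_div_comm, div_mul_div_comm, div_eq_div_iff
      (by exact mul_ne_zero (mul_ne_zero h3 h4) hWj)
      (by exact mul_ne_zero hWj (mul_ne_zero h3 h4))]
    linear_combination (poch (-((α+1+j : ℕ) : ℝ)) m * (j.choose s : ℝ) * poch (W - U) (j - s)
      * poch W j * poch V m * (Nat.factorial m : ℝ)) * huu m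
  rw [Finset.sum_congr rfl step3]
  -- step 4 : all terms with s < j vanish
  rw [Finset.sum_range_succ]
  have step4 : ∀ s ∈ range j,
      ((j.choose s : ℝ) * poch (W - U) (j - s) * poch U s / poch W j)
        * (poch (-((α+1+s : ℕ) : ℝ)) (α+1+j) / poch V (α+1+j)) = 0 := by
    intro s hs
    have hslt : α+1+s < α+1+j := by
      have := mem_range.mp hs; omega
    rw [poch_neg_zero_of_lt hslt, zero_div, mul_zero]
  rw [Finset.sum_eq_zero step4, zero_add, Nat.sub_self, poch_zero, Nat.choose_self,
    poch_neg_self]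
  -- step 5 : evaluate the remaining pochhammers as factorials
  have hU2 : poch U j = ((2*α+4).factorial : ℝ) / ((2*α+4-j).factorial : ℝ) := by
    have h := poch_fac (2*α+4-j) j
    rw [show ((2*α+4-j : ℕ) : ℝ) + 1 = U from by
        rw [hU]; push_cast [Nat.cast_sub (show j ≤ 2*α+4 by omega)]; ring,
      show 2*α+4-j+j = 2*α+4 from by omega] at h
    rw [eq_div_iff (by positivity)]
    linarith [h]
  have hV2 : poch V (α+1+j) = ((2*α+4).factorial : ℝ) / ((α+3-j).factorial : ℝ) := by
    have h := poch_fac (α+3-j) (α+1+j)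
    rw [show ((α+3-j : ℕ) : ℝ) + 1 = V from by
        rw [hV]; push_cast [Nat.cast_sub (show j ≤ α+3 by omega)]; ring,
      show α+3-j+(α+1+j) = 2*α+4 from by omega] at h
    rw [eq_div_iff (by positivity)]
    linarith [h]
  rw [hU2, hV2]
  have hf1 : ((2*α+4).factorial : ℝ) ≠ 0 := by positivity
  have hf2 : ((2*α+4-j).factorial : ℝ) ≠ 0 := by positivity
  have hf3 : ((α+3-j).factorial : ℝ) ≠ 0 := by positivity
  field_simp
  ring

/-- The coefficient `b_i(α,β,x)` of the differential equation:
`b_i(α,β,x) = (α+β+2) (−2)^i Σ_{ℓ=0}^{i−1} [(α+3)_{i−ℓ−1} (−α−2)_{i−ℓ−1} /`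
`((β+1)_{i−ℓ−1} (i−ℓ)! (i−ℓ−1)! ℓ!)] ₃F₂(−ℓ,α+β+3,α+i−ℓ+2;β+i−ℓ,i−ℓ+1;1) ((x−1)/2)^{ℓ+1}`. -/
noncomputable def bCoef (α β : ℝ) (i : ℕ) (x : ℝ) : ℝ :=
  (α + β + 2) * (-2 : ℝ) ^ i *
    ∑ ℓ ∈ Finset.range i,
      poch (α + 3) (i - ℓ - 1) * poch (-α - 2) (i - ℓ - 1) /
        (poch (β + 1) (i - ℓ - 1) * Nat.factorial (i - ℓ) * Nat.factorial (i - ℓ - 1) *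
          Nat.factorial ℓ) *
      (∑ m ∈ Finset.range (ℓ + 1),
        poch (-(ℓ : ℝ)) m * poch (α + β + 3) m * poch (α + (i : ℝ) - (ℓ : ℝ) + 2) m /
          (poch (β + (i : ℝ) - (ℓ : ℝ)) m * poch ((i : ℝ) - (ℓ : ℝ) + 1) m *
            Nat.factorial m)) *
      ((x - 1) / 2) ^ (ℓ + 1)

lemma term_final (α j : ℕ) (hj : j ≤ α + 2) (β x : ℝ) (hβ : -1 < β) :
    ((α : ℝ) + β + 2) * (-2 : ℝ) ^ (α+1+(α+3)) *
      (poch ((α : ℝ) + 3) (α+2-j) * poch (-(α : ℝ) - 2) (α+2-j) /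
        (poch (β + 1) (α+2-j) * ((α+3-j).factorial : ℝ) * ((α+2-j).factorial : ℝ)
          * ((α+1+j).factorial : ℝ)) *
        ((-1 : ℝ)^(α+1+j) * ((α+1+j).factorial : ℝ) * ((α+3-j).factorial : ℝ) /
          (((2*α+4-j).factorial : ℝ) * poch (β + (α : ℝ) + 3 - (j : ℝ)) j)) *
        ((x - 1) / 2) ^ (α+1+j+1))
    = -(((α+2).choose j : ℝ) * ((x - 1) ^ (α+2+j) * 2 ^ (α+2-j)))
        / (poch (β + 1) (α+1) * ((α+2).factorial : ℝ)) := by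
  have hjr : (j : ℝ) ≤ (α : ℝ) + 2 := by exact_mod_cast hj
  have hb1 : (0 : ℝ) < β + 1 := by linarith
  have hβα2 : (0 : ℝ) < β + (α : ℝ) + 2 := by linarith [Nat.cast_nonneg (α := ℝ) α]
  have hpk : (0 : ℝ) < poch (β + 1) (α+2-j) := poch_pos hb1 _
  have hpa : (0 : ℝ) < poch (β + 1) (α+1) := poch_pos hb1 _
  have h1 : poch ((α : ℝ) + 3) (α+2-j)
      = ((2*α+4-j).factorial : ℝ) / (((α+2)).factorial : ℝ) := by
    have h := poch_fac (α+2) (α+2-j)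
    rw [show ((α+2 : ℕ) : ℝ) + 1 = (α : ℝ) + 3 from by push_cast; ring,
      show α+2+(α+2-j) = 2*α+4-j from by omega] at h
    rw [eq_div_iff (by positivity)]
    linarith [h]
  have h2 : poch (-(α : ℝ) - 2) (α+2-j)
      = (-1 : ℝ)^(α+2-j) * (((α+2-j).factorial : ℝ) * (((α+2).choose j : ℝ))) := by
    rw [show -(α : ℝ) - 2 = -((α+2 : ℕ) : ℝ) from by push_cast; ring, poch_neg_nat,
      Nat.descFactorial_eq_factorial_mul_choose, Nat.choose_symm hj]
    push_cast
    ring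
  have h3 : poch (β + 1) (α+2-j) * poch (β + (α : ℝ) + 3 - (j : ℝ)) j
      = poch (β + 1) (α+1) * (β + (α : ℝ) + 2) := by
    have h := poch_add (β + 1) (α+2-j) j
    rw [show α+2-j+j = α+2 from by omega,
      show β + 1 + ((α+2-j : ℕ) : ℝ) = β + (α : ℝ) + 3 - (j : ℝ) from by
        push_cast [Nat.cast_sub hj]; ring] at h
    rw [← h, show α+2 = α+1+1 from rfl, poch_succ]
    push_cast; ring
  have hq : poch (β + (α : ℝ) + 3 - (j : ℝ)) j
      = poch (β + 1) (α+1) * (β + (α : ℝ) + 2) / poch (β + 1) (α+2-j) := by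
    rw [eq_div_iff (ne_of_gt hpk)]
    linarith [h3]
  have hp1 : (-2 : ℝ) ^ (α+1+(α+3)) = 2 ^ (α+2+j) * 2 ^ (α+2-j) := by
    rw [show α+1+(α+3) = 2*(α+2) from by omega, pow_mul,
      show ((-2 : ℝ))^2 = 2^2 from by norm_num, ← pow_mul,
      show 2*(α+2) = (α+2+j)+(α+2-j) from by omega, pow_add]
  have hp2 : ((x - 1) / 2) ^ (α+1+j+1) = (x - 1) ^ (α+2+j) / 2 ^ (α+2+j) := by
    rw [div_pow, show α+1+j+1 = α+2+j from by omega]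
  rcases Nat.even_or_odd (α + j) with hpar | hpar
  · have e1 : (-1 : ℝ)^(α+2-j) = 1 :=
      Even.neg_one_pow (Nat.even_iff.mpr (by rw [Nat.even_iff] at hpar; omega))
    have e2 : (-1 : ℝ)^(α+1+j) = -1 :=
      Odd.neg_one_pow (Nat.odd_iff.mpr (by rw [Nat.even_iff] at hpar; omega))
    rw [h1, h2, hq, hp1, hp2, e1, e2]
    have hne1 : ((α+2).factorial : ℝ) ≠ 0 := by positivity
    have hne2 : ((α+2-j).factorial : ℝ) ≠ 0 := by positivity
    have hne3 : ((α+3-j).factorial : ℝ) ≠ 0 := by positivity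
    have hne4 : ((α+1+j).factorial : ℝ) ≠ 0 := by positivity
    have hne5 : ((2*α+4-j).factorial : ℝ) ≠ 0 := by positivity
    have hne6 : (2 : ℝ) ^ (α+2+j) ≠ 0 := by positivity
    field_simp
    ring
  · have e1 : (-1 : ℝ)^(α+2-j) = -1 :=
      Odd.neg_one_pow (Nat.odd_iff.mpr (by rw [Nat.odd_iff] at hpar; omega))
    have e2 : (-1 : ℝ)^(α+1+j) = 1 :=
      Even.neg_one_pow (Nat.even_iff.mpr (by rw [Nat.odd_iff] at hpar; omega))
    rw [h1, h2, hq, hp1, hp2, e1, e2]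
    have hne1 : ((α+2).factorial : ℝ) ≠ 0 := by positivity
    have hne2 : ((α+2-j).factorial : ℝ) ≠ 0 := by positivity
    have hne3 : ((α+3-j).factorial : ℝ) ≠ 0 := by positivity
    have hne4 : ((α+1+j).factorial : ℝ) ≠ 0 := by positivity
    have hne5 : ((2*α+4-j).factorial : ℝ) ≠ 0 := by positivity
    have hne6 : (2 : ℝ) ^ (α+2+j) ≠ 0 := by positivity
    field_simp
    ring

/-- for a nonnegative integer `α`,
`b_{2α+4}(α,β,x) = −(x²−1)^{α+2} / ((β+1)_{α+1} (α+2)!)`. -/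
theorem bCoef_top (α : ℕ) (β : ℝ) (hβ : -1 < β) (x : ℝ) :
    bCoef (α : ℝ) β (2 * α + 4) x =
      -((x ^ 2 - 1) ^ (α + 2)) / (poch (β + 1) (α + 1) * Nat.factorial (α + 2)) := by
  simp only [bCoef]
  rw [show 2*α+4 = α+1+(α+3) from by omega]
  rw [Finset.sum_range_add]
  have h0 : ∑ ℓ ∈ range (α+1),
      (poch ((α : ℝ) + 3) (α+1+(α+3) - ℓ - 1) * poch (-(α : ℝ) - 2) (α+1+(α+3) - ℓ - 1) /
        (poch (β + 1) (α+1+(α+3) - ℓ - 1) * ((α+1+(α+3) - ℓ).factorial : ℝ)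
          * ((α+1+(α+3) - ℓ - 1).factorial : ℝ) * (ℓ.factorial : ℝ)) *
      (∑ m ∈ Finset.range (ℓ + 1),
        poch (-(ℓ : ℝ)) m * poch ((α : ℝ) + β + 3) m
          * poch ((α : ℝ) + ((α+1+(α+3) : ℕ) : ℝ) - (ℓ : ℝ) + 2) m /
          (poch (β + ((α+1+(α+3) : ℕ) : ℝ) - (ℓ : ℝ)) m
            * poch (((α+1+(α+3) : ℕ) : ℝ) - (ℓ : ℝ) + 1) m * (Nat.factorial m : ℝ))) *
      ((x - 1) / 2) ^ (ℓ + 1)) = 0 := by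
    apply Finset.sum_eq_zero
    intro ℓ hℓ
    have hℓ' : ℓ < α + 1 := mem_range.mp hℓ
    rw [show -(α : ℝ) - 2 = -((α+2 : ℕ) : ℝ) from by push_cast; ring,
      poch_neg_zero_of_lt (show α+2 < α+1+(α+3) - ℓ - 1 from by omega)]
    simp
  rw [h0, zero_add, Finset.mul_sum]
  have hRHS : -((x ^ 2 - 1) ^ (α + 2)) / (poch (β + 1) (α + 1) * ((α+2).factorial : ℝ))
      = ∑ j ∈ range (α+3),
          -(((α+2).choose j : ℝ) * ((x - 1) ^ (α+2+j) * 2 ^ (α+2-j)))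
            / (poch (β + 1) (α+1) * ((α+2).factorial : ℝ)) := by
    rw [← Finset.sum_div]
    congr 1
    have hpow : ((x^2 - 1 : ℝ)) ^ (α+2)
        = ∑ j ∈ range (α+3), ((α+2).choose j : ℝ) * ((x - 1) ^ (α+2+j) * 2 ^ (α+2-j)) := by
      rw [show (x^2 - 1 : ℝ) = (x-1) * ((x-1)+2) from by ring, mul_pow, add_pow,
        show α+2+1 = α+3 from by omega, Finset.mul_sum]
      apply Finset.sum_congr rfl
      intro j hj
      rw [pow_add]
      ring
    rw [hpow, ← Finset.sum_neg_distrib]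
  rw [hRHS]
  apply Finset.sum_congr rfl
  intro j hjm
  have hj : j ≤ α+2 := by have := mem_range.mp hjm; omega
  rw [show α+1+(α+3) - (α+1+j) - 1 = α+2-j from by omega,
    show α+1+(α+3) - (α+1+j) = α+3-j from by omega]
  rw [inner_eval α j hj β hβ ((α+1+j : ℕ) : ℝ)
      ((α : ℝ) + ((α+1+(α+3) : ℕ) : ℝ) - ((α+1+j : ℕ) : ℝ) + 2)
      (((α+1+(α+3) : ℕ) : ℝ) - ((α+1+j : ℕ) : ℝ) + 1)
      (β + ((α+1+(α+3) : ℕ) : ℝ) - ((α+1+j : ℕ) : ℝ))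
      (by push_cast; ring) (by push_cast; ring) (by push_cast; ring) (by push_cast; ring)]
  rw [show β + ((α+1+(α+3) : ℕ) : ℝ) - ((α+1+j : ℕ) : ℝ) = β + (α : ℝ) + 3 - (j : ℝ) from by
    push_cast; ring]
  exact term_final α j hj β x hβ
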